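/- Assume λ₂ > 0 (which holds by irreducibility and aperiodicity of P). Then the Dirichlet energy of the value function satisfies vᵀΦLv ≤ ‖r̄‖²_Φ / λ₂. -/
import Mathlib


open Matrix Finset

noncomputable def phiNorm {d : ℕ} (Φ : Matrix (Fin d) (Fin d) ℝ) (x : Fin d → ℝ) : ℝ :=
  Real.sqrt (x ⬝ᵥ (Φ *ᵥ x))

theorem stmt12 {d : ℕ} (hd : 2 ≤ d)
    (P : Matrix (Fin d) (Fin d) ℝ)
    (hP_nonneg : ∀ i j, 0 ≤ P i j)
    (hP_row : ∀ i, ∑ j, P i j = 1)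
    (hP_erg : ∃ n : ℕ, 1 ≤ n ∧ ∀ i j, 0 < (P ^ n) i j)
    (φ : Fin d → ℝ)
    (hφ_pos : ∀ i, 0 < φ i)
    (hφ_sum : ∑ i, φ i = 1)
    (hφ_stat : φ ᵥ* P = φ)
    (Φ : Matrix (Fin d) (Fin d) ℝ) (hΦ : Φ = Matrix.diagonal φ)
    (L : Matrix (Fin d) (Fin d) ℝ)
    (hL : L = 1 - (2⁻¹ : ℝ) • (P + Φ⁻¹ * Pᵀ * Φ))
    (lam : Fin d → ℝ) (u : Fin d → Fin d → ℝ)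
    (hlam_mono : Monotone lam)
    (hlam_zero : lam ⟨0, by omega⟩ = 0)
    (h_eig : ∀ i, L *ᵥ u i = lam i • u i)
    (h_orth : ∀ i j, (u i) ⬝ᵥ (Φ *ᵥ u j) = if i = j then 1 else 0)
    (hlam2_pos : 0 < lam ⟨1, by omega⟩)
    (r rbar : Fin d → ℝ)
    (hrbar : rbar = r - (φ ⬝ᵥ r) • (fun _ => (1 : ℝ)))
    (v : Fin d → ℝ)
    (hv : v = rbar + P *ᵥ v)
    (hv0 : φ ⬝ᵥ v = 0)
    : v ⬝ᵥ (Φ *ᵥ (L *ᵥ v)) ≤ (phiNorm Φ rbar) ^ 2 / lam ⟨1, by omega⟩ := by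
  -- Φ is invertible with inverse diagonal φ⁻¹
  have hΦD : Φ * Matrix.diagonal (fun i => (φ i)⁻¹) = 1 := by
    rw [hΦ, Matrix.diagonal_mul_diagonal, ← Matrix.diagonal_one]
    have he : (fun i => φ i * (φ i)⁻¹) = fun _ : Fin d => (1 : ℝ) :=
      funext fun i => mul_inv_cancel₀ (hφ_pos i).ne'
    rw [he]
  have hΦinv : Φ⁻¹ = Matrix.diagonal (fun i => (φ i)⁻¹) := Matrix.inv_eq_right_inv hΦD
  have hΦΦinv : Φ * Φ⁻¹ = 1 := by rw [hΦinv]; exact hΦD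
  -- Φ L = Φ - ½(ΦP + PᵀΦ)
  have hΦL : Φ * L = Φ - (2⁻¹ : ℝ) • (Φ * P + Pᵀ * Φ) := by
    rw [hL, Matrix.mul_sub, Matrix.mul_one, Matrix.mul_smul, Matrix.mul_add]
    congr 3
    calc Φ * (Φ⁻¹ * Pᵀ * Φ) = Φ * Φ⁻¹ * (Pᵀ * Φ) := by
          rw [Matrix.mul_assoc, Matrix.mul_assoc]
      _ = Pᵀ * Φ := by rw [hΦΦinv, Matrix.one_mul]
  have hΦsym : Φᵀ = Φ := by rw [hΦ, Matrix.diagonal_transpose]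
  have hΦLsym : (Φ * L)ᵀ = Φ * L := by
    rw [hΦL]
    rw [Matrix.transpose_sub, Matrix.transpose_smul, Matrix.transpose_add,
      Matrix.transpose_mul, Matrix.transpose_mul, Matrix.transpose_transpose, hΦsym]
    rw [add_comm]
  have hLtΦ : Lᵀ * Φ = Φ * L := by
    calc Lᵀ * Φ = Lᵀ * Φᵀ := by rw [hΦsym]
      _ = (Φ * L)ᵀ := (Matrix.transpose_mul Φ L).symm
      _ = Φ * L := hΦLsym
  -- symmetry of the quadratic form
  have hsym : ∀ x y : Fin d → ℝ, x ⬝ᵥ (Φ *ᵥ (L *ᵥ y)) = (L *ᵥ x) ⬝ᵥ (Φ *ᵥ y) := by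
    intro x y
    rw [Matrix.mulVec_mulVec, Matrix.dotProduct_mulVec x (Φ * L) y,
      Matrix.dotProduct_mulVec (L *ᵥ x) Φ y, ← Matrix.vecMul_transpose L x,
      Matrix.vecMul_vecMul, hLtΦ]
  -- symmetry of ip
  have hipsym : ∀ x y : Fin d → ℝ, x ⬝ᵥ (Φ *ᵥ y) = y ⬝ᵥ (Φ *ᵥ x) := by
    intro x y
    simp only [hΦ, dotProduct, Matrix.mulVec_diagonal]
    exact Finset.sum_congr rfl fun i _ => by ring
  -- orthonormal rows give U (Φ Uᵀ) = 1 etc.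
  set U : Matrix (Fin d) (Fin d) ℝ := Matrix.of u with hU
  have hUrow : ∀ (w : Fin d → ℝ) i, (U *ᵥ w) i = u i ⬝ᵥ w := fun w i => rfl
  have h1 : U * (Φ * Uᵀ) = 1 := by
    ext i j
    have h2 : (U * (Φ * Uᵀ)) i j = u i ⬝ᵥ (Φ *ᵥ u j) := by
      simp only [Matrix.mul_apply, dotProduct, Matrix.mulVec,
        dotProduct, Matrix.transpose_apply]
      rfl
    rw [h2, h_orth i j, Matrix.one_apply]
  have h2 : (Φ * Uᵀ) * U = 1 := mul_eq_one_comm.mp h1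
  have h3 : (Uᵀ * U) * Φ = 1 := by
    apply mul_eq_one_comm.mp
    rw [← Matrix.mul_assoc]
    exact h2
  have hexpand : ∀ x : Fin d → ℝ, Uᵀ *ᵥ (U *ᵥ (Φ *ᵥ x)) = x := by
    intro x
    rw [Matrix.mulVec_mulVec, Matrix.mulVec_mulVec, h3, Matrix.one_mulVec]
  have hdotU : ∀ a b : Fin d → ℝ, (U *ᵥ a) ⬝ᵥ b = a ⬝ᵥ (Uᵀ *ᵥ b) := by
    intro a b
    rw [dotProduct_comm, Matrix.dotProduct_mulVec, dotProduct_comm,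
      Matrix.mulVec_transpose]
  -- Parseval
  have hpars : ∀ x y : Fin d → ℝ,
      x ⬝ᵥ (Φ *ᵥ y) = ∑ i, (u i ⬝ᵥ (Φ *ᵥ x)) * (u i ⬝ᵥ (Φ *ᵥ y)) := by
    intro x y
    have key : (U *ᵥ (Φ *ᵥ x)) ⬝ᵥ (U *ᵥ (Φ *ᵥ y)) = x ⬝ᵥ (Φ *ᵥ y) := by
      rw [hdotU, hexpand, ← hipsym]
      exact dotProduct_comm _ _
    rw [← key]
    simp only [dotProduct, hUrow]
  -- coefficients of v
  set c : Fin d → ℝ := fun i => u i ⬝ᵥ (Φ *ᵥ v) with hc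
  -- E = Σ lam i * c i ^ 2
  have hcoefL : ∀ i, u i ⬝ᵥ (Φ *ᵥ (L *ᵥ v)) = lam i * c i := by
    intro i
    rw [hsym, h_eig i, smul_dotProduct, hc]
    simp only [smul_eq_mul]
  have hE : v ⬝ᵥ (Φ *ᵥ (L *ᵥ v)) = ∑ i, lam i * c i ^ 2 := by
    rw [hpars v (L *ᵥ v)]
    exact Finset.sum_congr rfl fun i _ => by rw [hcoefL i]; ring
  -- the constant vector is in the kernel of L
  set one : Fin d → ℝ := fun _ => (1 : ℝ) with hone
  have hPone : P *ᵥ one = one := by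
    funext i
    simp only [Matrix.mulVec, dotProduct, hone, mul_one]
    exact hP_row i
  have hΦone : Φ *ᵥ one = φ := by
    funext i
    rw [hΦ, Matrix.mulVec_diagonal]
    simp [hone]
  have hL1 : L *ᵥ one = 0 := by
    rw [hL, Matrix.sub_mulVec, Matrix.one_mulVec, Matrix.smul_mulVec,
      Matrix.add_mulVec, hPone]
    have h4 : (Φ⁻¹ * Pᵀ * Φ) *ᵥ one = one := by
      rw [Matrix.mul_assoc, ← Matrix.mulVec_mulVec, ← Matrix.mulVec_mulVec, hΦone]
      rw [Matrix.mulVec_transpose, hφ_stat]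
      rw [hΦinv]
      funext i
      rw [Matrix.mulVec_diagonal]
      simp [hone, inv_mul_cancel₀ (hφ_pos i).ne']
    rw [h4]
    funext i
    simp only [hone, Pi.sub_apply, Pi.smul_apply, Pi.add_apply, Pi.zero_apply,
      smul_eq_mul]
    norm_num
  -- coefficients of the constant vector
  set a : Fin d → ℝ := fun i => u i ⬝ᵥ (Φ *ᵥ one) with ha
  have hlam_pos : ∀ i : Fin d, i ≠ ⟨0, by omega⟩ → 0 < lam i := by
    intro i hi
    refine lt_of_lt_of_le hlam2_pos (hlam_mono ?_)
    show (⟨1, by omega⟩ : Fin d) ≤ i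
    have h5 : (1 : ℕ) ≤ i.val := by
      rcases Nat.eq_zero_or_pos i.val with h | h
      · exact absurd (Fin.ext h) hi
      · exact h
    exact h5
  have ha_zero : ∀ i : Fin d, i ≠ ⟨0, by omega⟩ → a i = 0 := by
    intro i hi
    have h0 : u i ⬝ᵥ (Φ *ᵥ (L *ᵥ one)) = lam i * a i := by
      rw [hsym, h_eig i, smul_dotProduct, ha]
      simp only [smul_eq_mul]
    rw [hL1] at h0
    simp only [Matrix.mulVec_zero, dotProduct_zero] at h0
    have h6 := hlam_pos i hi
    rcases mul_eq_zero.mp h0.symm with h | h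
    · exact absurd h h6.ne'
    · exact h
  have hione : one ⬝ᵥ (Φ *ᵥ one) = 1 := by
    rw [hΦone]
    simp only [dotProduct, hone, one_mul]
    exact hφ_sum
  have hionev : one ⬝ᵥ (Φ *ᵥ v) = 0 := by
    rw [hipsym]
    have h7 : v ⬝ᵥ (Φ *ᵥ one) = φ ⬝ᵥ v := by
      rw [hΦone, dotProduct_comm]
    rw [h7, hv0]
  -- a 0 ≠ 0 and c 0 = 0
  have ha0sq : a ⟨0, by omega⟩ ^ 2 = 1 := by
    have h8 := hpars one one
    rw [hione] at h8
    rw [Finset.sum_eq_single (⟨0, by omega⟩ : Fin d)] at h8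
    · rw [sq]; exact h8.symm
    · intro i _ hi
      rw [show u i ⬝ᵥ (Φ *ᵥ one) = a i from rfl, ha_zero i hi]
      ring
    · intro h; exact absurd (Finset.mem_univ _) h
  have hc0 : c ⟨0, by omega⟩ = 0 := by
    have h9 := hpars one v
    rw [hionev] at h9
    rw [Finset.sum_eq_single (⟨0, by omega⟩ : Fin d)] at h9
    · have ha0 : a ⟨0, by omega⟩ ≠ 0 := by
        intro h
        rw [h] at ha0sq
        norm_num at ha0sq
      have h10 : a ⟨0, by omega⟩ * c ⟨0, by omega⟩ = 0 := h9.symm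
      exact (mul_eq_zero.mp h10).resolve_left ha0
    · intro i _ hi
      rw [show u i ⬝ᵥ (Φ *ᵥ one) = a i from rfl, ha_zero i hi]
      ring
    · intro h; exact absurd (Finset.mem_univ _) h
  -- norm of v
  have hN : v ⬝ᵥ (Φ *ᵥ v) = ∑ i, c i ^ 2 := by
    rw [hpars v v]
    exact Finset.sum_congr rfl fun i _ => by ring
  have hNE : lam ⟨1, by omega⟩ * (v ⬝ᵥ (Φ *ᵥ v)) ≤ v ⬝ᵥ (Φ *ᵥ (L *ᵥ v)) := by
    rw [hN, hE, Finset.mul_sum]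
    apply Finset.sum_le_sum
    intro i _
    by_cases hi : i = ⟨0, by omega⟩
    · subst hi
      rw [hc0]
      simp
    · have h11 : lam ⟨1, by omega⟩ ≤ lam i := by
        apply hlam_mono
        show (⟨1, by omega⟩ : Fin d) ≤ i
        have h5 : (1 : ℕ) ≤ i.val := by
          rcases Nat.eq_zero_or_pos i.val with h | h
          · exact absurd (Fin.ext h) hi
          · exact h
        exact h5
      exact mul_le_mul_of_nonneg_right h11 (sq_nonneg _)
  -- E = ⟨v, rbar⟩
  have hEr : v ⬝ᵥ (Φ *ᵥ (L *ᵥ v)) = v ⬝ᵥ (Φ *ᵥ rbar) := by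
    have hrv : rbar = v - P *ᵥ v := eq_sub_of_add_eq hv.symm
    rw [Matrix.mulVec_mulVec, hΦL]
    rw [Matrix.sub_mulVec, Matrix.smul_mulVec, Matrix.add_mulVec]
    rw [dotProduct_sub, dotProduct_smul, dotProduct_add]
    have hPt : v ⬝ᵥ ((Pᵀ * Φ) *ᵥ v) = v ⬝ᵥ ((Φ * P) *ᵥ v) := by
      rw [← Matrix.mulVec_mulVec, ← Matrix.mulVec_mulVec]
      rw [Matrix.dotProduct_mulVec v Pᵀ (Φ *ᵥ v)]
      have h12 : v ᵥ* Pᵀ = P *ᵥ v := Matrix.vecMul_transpose P v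
      rw [h12, hipsym (P *ᵥ v) v]
    rw [hPt, hrv]
    rw [Matrix.mulVec_sub, dotProduct_sub, ← Matrix.mulVec_mulVec]
    simp only [smul_eq_mul]
    ring
  -- Cauchy–Schwarz
  have hip_sum : ∀ x y : Fin d → ℝ, x ⬝ᵥ (Φ *ᵥ y) = ∑ i, φ i * x i * y i := by
    intro x y
    simp only [hΦ, dotProduct, Matrix.mulVec_diagonal]
    exact Finset.sum_congr rfl fun i _ => by ring
  have hCS : (v ⬝ᵥ (Φ *ᵥ rbar)) ^ 2 ≤ (v ⬝ᵥ (Φ *ᵥ v)) * (rbar ⬝ᵥ (Φ *ᵥ rbar)) := by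
    rw [hip_sum v rbar, hip_sum v v, hip_sum rbar rbar]
    have h := Finset.sum_mul_sq_le_sq_mul_sq Finset.univ
      (fun i => Real.sqrt (φ i) * v i) (fun i => Real.sqrt (φ i) * rbar i)
    have hs : ∀ i : Fin d, Real.sqrt (φ i) * Real.sqrt (φ i) = φ i :=
      fun i => Real.mul_self_sqrt (hφ_pos i).le
    have e1 : ∀ i : Fin d, φ i * v i * rbar i
        = Real.sqrt (φ i) * v i * (Real.sqrt (φ i) * rbar i) := fun i => by
      linear_combination (-(v i * rbar i)) * hs i
    have e2 : ∀ i : Fin d, (Real.sqrt (φ i) * v i) ^ 2 = φ i * v i * v i := fun i => by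
      linear_combination (v i * v i) * hs i
    have e3 : ∀ i : Fin d, (Real.sqrt (φ i) * rbar i) ^ 2
        = φ i * rbar i * rbar i := fun i => by
      linear_combination (rbar i * rbar i) * hs i
    calc (∑ i, φ i * v i * rbar i) ^ 2
        = (∑ i, Real.sqrt (φ i) * v i * (Real.sqrt (φ i) * rbar i)) ^ 2 := by
          congr 1
          exact Finset.sum_congr rfl fun i _ => e1 i
      _ ≤ (∑ i, (Real.sqrt (φ i) * v i) ^ 2) * ∑ i, (Real.sqrt (φ i) * rbar i) ^ 2 := h
      _ = (∑ i, φ i * v i * v i) * ∑ i, φ i * rbar i * rbar i := by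
          rw [Finset.sum_congr rfl fun i _ => e2 i, Finset.sum_congr rfl fun i _ => e3 i]
  -- nonnegativity
  have hR_nonneg : 0 ≤ rbar ⬝ᵥ (Φ *ᵥ rbar) := by
    rw [hip_sum rbar rbar]
    apply Finset.sum_nonneg
    intro i _
    nlinarith [sq_nonneg (rbar i), (hφ_pos i).le]
  have hN_nonneg : 0 ≤ v ⬝ᵥ (Φ *ᵥ v) := by
    rw [hip_sum v v]
    apply Finset.sum_nonneg
    intro i _
    nlinarith [sq_nonneg (v i), (hφ_pos i).le]
  -- conclude
  have hphinorm : (phiNorm Φ rbar) ^ 2 = rbar ⬝ᵥ (Φ *ᵥ rbar) := by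
    rw [phiNorm, Real.sq_sqrt hR_nonneg]
  rw [hphinorm, le_div_iff₀ hlam2_pos]
  rw [← hEr] at hCS
  set E := v ⬝ᵥ (Φ *ᵥ (L *ᵥ v)) with hEdef
  set R := rbar ⬝ᵥ (Φ *ᵥ rbar) with hRdef
  set N := v ⬝ᵥ (Φ *ᵥ v) with hNdef
  rcases le_or_gt E 0 with hE0 | hE0
  · calc E * lam ⟨1, by omega⟩ ≤ 0 :=
        mul_nonpos_of_nonpos_of_nonneg hE0 hlam2_pos.le
      _ ≤ R := hR_nonneg
  · nlinarith [mul_le_mul_of_nonneg_left hCS hlam2_pos.le,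
      mul_le_mul_of_nonneg_right hNE hR_nonneg, mul_pos hE0 hlam2_pos]
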